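/- No uninitialized memory access: if !e is well-typed with type τ and evaluates (in a well-formed state) in n steps to a value, then e has pointer type τ* with a smaller-or-equal effect, e evaluates to some location l, and the memory of the resulting state contains a value at l; i.e., every dereference in a well-typed program reads an initialized location. -/
import Mathlib


/-- Types of the BeePL core language. -/
inductive Ty : Type
  | int : Ty
  | bool : Ty
  | unit : Ty
  | ptr : Ty → Ty
  | opt : Ty → Ty
deriving DecidableEq

/-- Effects. -/
inductive Eff : Type
  | divergence | read | write | alloc | io
deriving DecidableEq

/-- Expressions of the BeePL core language. -/
inductive Expr : Type
  | var : String → Expr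
  | intC : Int → Expr
  | boolC : Bool → Expr
  | unitC : Expr
  | loc : Nat → Expr
  | ref : Expr → Expr
  | deref : Expr → Expr
  | assign : Expr → Expr → Expr
  | uop : Expr → Expr
  | bop : Expr → Expr → Expr
  | letin : String → Ty → Expr → Expr → Expr
  | cond : Expr → Expr → Expr → Expr
  | noneE : Expr
  | someE : Expr → Expr
  | matchE : Expr → Expr → String → Expr → Expr
deriving DecidableEq

/-- Substitution `e'[x := s]`; `let`/`match` bindings of the same name shadow. -/
def subst (x : String) (s : Expr) : Expr → Expr
  | .var y => if y = x then s else .var y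
  | .intC n => .intC n
  | .boolC b => .boolC b
  | .unitC => .unitC
  | .loc l => .loc l
  | .ref e => .ref (subst x s e)
  | .deref e => .deref (subst x s e)
  | .assign e1 e2 => .assign (subst x s e1) (subst x s e2)
  | .uop e => .uop (subst x s e)
  | .bop e1 e2 => .bop (subst x s e1) (subst x s e2)
  | .letin y τ e1 e2 => .letin y τ (subst x s e1) (if y = x then e2 else subst x s e2)
  | .cond e e1 e2 => .cond (subst x s e) (subst x s e1) (subst x s e2)
  | .noneE => .noneE
  | .someE e => .someE (subst x s e)
  | .matchE m e1 y e2 => .matchE (subst x s m) (subst x s e1) y (if y = x then e2 else subst x s e2)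

/-- Extend a typing context. -/
def updTC (Γ : String → Option Ty) (x : String) (τ : Ty) : String → Option Ty :=
  fun y => if y = x then some τ else Γ y

/-- Typing judgment `Γ; Σ ⊢ e : τ, η`. -/
inductive HasType : (String → Option Ty) → (Nat → Option Ty) → Expr → Ty → List Eff → Prop
  | var {Γ St x τ} : Γ x = some τ → HasType Γ St (.var x) τ []
  | intC {Γ St n} : HasType Γ St (.intC n) .int []
  | boolC {Γ St b} : HasType Γ St (.boolC b) .bool []
  | unitC {Γ St} : HasType Γ St .unitC .unit []
  | loc {Γ St l τ} : St l = some τ → HasType Γ St (.loc l) (.ptr τ) []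
  | ref {Γ St e τ η} : HasType Γ St e τ η →
      HasType Γ St (.ref e) (.ptr τ) (.alloc :: η)
  | deref {Γ St e τ η} : HasType Γ St e (.ptr τ) η →
      HasType Γ St (.deref e) τ (.read :: η)
  | assign {Γ St e1 e2 τ η1 η2} : HasType Γ St e1 (.ptr τ) η1 → HasType Γ St e2 τ η2 →
      HasType Γ St (.assign e1 e2) .unit (η1 ++ η2 ++ [.write])
  | uop {Γ St e η} : HasType Γ St e .int η → HasType Γ St (.uop e) .int η
  | bop {Γ St e1 e2 η1 η2} : HasType Γ St e1 .int η1 → HasType Γ St e2 .int η2 →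
      HasType Γ St (.bop e1 e2) .int (η1 ++ η2)
  | letin {Γ St x τ1 τ2 e1 e2 η1 η2} : HasType Γ St e1 τ1 η1 →
      HasType (updTC Γ x τ1) St e2 τ2 η2 →
      HasType Γ St (.letin x τ1 e1 e2) τ2 (η1 ++ η2)
  | cond {Γ St e e1 e2 τ η η1 η2} : HasType Γ St e .bool η → HasType Γ St e1 τ η1 →
      HasType Γ St e2 τ η2 → HasType Γ St (.cond e e1 e2) τ (η ++ η1 ++ η2)
  | noneE {Γ St τ} : HasType Γ St .noneE (.opt (.ptr τ)) []
  | someE {Γ St e τ η} : HasType Γ St e (.ptr τ) η →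
      HasType Γ St (.someE e) (.opt (.ptr τ)) η
  | matchE {Γ St m e1 x e2 τm τ ηm η1 η2} : HasType Γ St m (.opt (.ptr τm)) ηm →
      HasType Γ St e1 τ η1 → HasType (updTC Γ x (.ptr τm)) St e2 τ η2 →
      HasType Γ St (.matchE m e1 x e2) τ (ηm ++ η1 ++ η2)

/-- Values. -/
inductive IsVal : Expr → Prop
  | intC {n} : IsVal (.intC n)
  | boolC {b} : IsVal (.boolC b)
  | unitC : IsVal .unitC
  | loc {l} : IsVal (.loc l)
  | noneE : IsVal .noneE
  | someE {v} : IsVal v → IsVal (.someE v)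

/-- Program states: global environment Δ, variable environment Ω, memory Θ. -/
structure State where
  glob : String → Option Nat
  env : String → Option (Nat × Ty)
  mem : Nat → Option Expr

/-- Update the memory of a state. -/
def setMem (s : State) (l : Nat) (v : Expr) : State :=
  { s with mem := fun l' => if l' = l then some v else s.mem l' }

/-- Well-formedness of a state with respect to Γ and Σ. -/
def WFState (Γ : String → Option Ty) (St : Nat → Option Ty) (s : State) : Prop :=
  (∀ x τ, Γ x = some τ →
      ∃ l, (s.env x = some (l, τ) ∨ (s.env x = none ∧ s.glob x = some l)) ∧
        St l = some τ) ∧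
  (∀ l τ, St l = some τ → ∃ v, s.mem l = some v ∧ IsVal v ∧ HasType Γ St v τ []) ∧
  (∀ l v, s.mem l = some v → ∃ τ, St l = some τ)

/-- Small-step operational semantics, call-by-value, left-to-right. -/
inductive Step : State → Expr → State → Expr → Prop
  | varLocal {s x l τ v} : s.env x = some (l, τ) → s.mem l = some v →
      Step s (.var x) s v
  | varGlobal {s x l v} : s.env x = none → s.glob x = some l → s.mem l = some v →
      Step s (.var x) s v
  | refCtx {s s' e e'} : Step s e s' e' → Step s (.ref e) s' (.ref e')
  | refVal {s v l} : IsVal v → s.mem l = none →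
      Step s (.ref v) (setMem s l v) (.loc l)
  | derefCtx {s s' e e'} : Step s e s' e' → Step s (.deref e) s' (.deref e')
  | derefVal {s l v} : s.mem l = some v → Step s (.deref (.loc l)) s v
  | assignCtx1 {s s' e1 e1' e2} : Step s e1 s' e1' →
      Step s (.assign e1 e2) s' (.assign e1' e2)
  | assignCtx2 {s s' v e2 e2'} : IsVal v → Step s e2 s' e2' →
      Step s (.assign v e2) s' (.assign v e2')
  | assignVal {s l v w} : IsVal v → s.mem l = some w →
      Step s (.assign (.loc l) v) (setMem s l v) .unitC
  | uopCtx {s s' e e'} : Step s e s' e' → Step s (.uop e) s' (.uop e')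
  | uopVal {s n} : Step s (.uop (.intC n)) s (.intC (-n))
  | bopCtx1 {s s' e1 e1' e2} : Step s e1 s' e1' →
      Step s (.bop e1 e2) s' (.bop e1' e2)
  | bopCtx2 {s s' v e2 e2'} : IsVal v → Step s e2 s' e2' →
      Step s (.bop v e2) s' (.bop v e2')
  | bopVal {s n1 n2} : Step s (.bop (.intC n1) (.intC n2)) s (.intC (n1 + n2))
  | letCtx {s s' x τ e1 e1' e2} : Step s e1 s' e1' →
      Step s (.letin x τ e1 e2) s' (.letin x τ e1' e2)
  | letVal {s x τ v e2} : IsVal v → Step s (.letin x τ v e2) s (subst x v e2)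
  | condCtx {s s' e e' e1 e2} : Step s e s' e' →
      Step s (.cond e e1 e2) s' (.cond e' e1 e2)
  | condT {s e1 e2} : Step s (.cond (.boolC true) e1 e2) s e1
  | condF {s e1 e2} : Step s (.cond (.boolC false) e1 e2) s e2
  | someCtx {s s' e e'} : Step s e s' e' → Step s (.someE e) s' (.someE e')
  | matchCtx {s s' m m' e1 x e2} : Step s m s' m' →
      Step s (.matchE m e1 x e2) s' (.matchE m' e1 x e2)
  | matchNone {s e1 x e2} : Step s (.matchE .noneE e1 x e2) s e1
  | matchSome {s v e1 x e2} : IsVal v →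
      Step s (.matchE (.someE v) e1 x e2) s (subst x v e2)

/-- Multi-step evaluation counting the number of steps. -/
inductive Steps : State → Expr → State → Expr → Nat → Prop
  | refl {s e} : Steps s e s e 0
  | tail {s e s' e' s'' e'' n} : Steps s e s' e' n → Step s' e' s'' e'' →
      Steps s e s'' e'' (n + 1)

/-- An expression is irreducible in a state if no step is possible. -/
def StuckExpr (s : State) (e : Expr) : Prop := ¬ ∃ s' e', Step s e s' e'

theorem steps_destruct {s e s'' e'' n} (h : Steps s e s'' e'' n) :
    (s = s'' ∧ e = e'' ∧ n = 0) ∨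
    ∃ s' e' m, n = m + 1 ∧ Step s e s' e' ∧ Steps s' e' s'' e'' m := by
  induction h with
  | refl => exact Or.inl ⟨rfl, rfl, rfl⟩
  | tail h1 h2 ih =>
    rcases ih with ⟨rfl, rfl, rfl⟩ | ⟨s', e', m, rfl, hst, hrest⟩
    · exact Or.inr ⟨_, _, 0, rfl, h2, .refl⟩
    · exact Or.inr ⟨s', e', m + 1, rfl, hst, hrest.tail h2⟩

theorem steps_cons {s e s' e' s'' e'' n} (h1 : Step s e s' e')
    (h2 : Steps s' e' s'' e'' n) : Steps s e s'' e'' (n + 1) := by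
  induction h2 with
  | refl => exact Steps.refl.tail h1
  | tail ha hb ih => exact ih.tail hb

theorem deref_steps_loc : ∀ n, ∀ {s e s'' v}, Steps s (.deref e) s'' v n → IsVal v →
    ∃ l s' m w, Steps s e s' (.loc l) m ∧ s'.mem l = some w := by
  intro n
  induction n using Nat.strong_induction_on with
  | _ n ih =>
    intro s e s'' v hsteps hval
    rcases steps_destruct hsteps with ⟨rfl, he, rfl⟩ | ⟨s', e', m, rfl, hst, hrest⟩
    · subst he; cases hval
    · cases hst with
      | derefCtx hst' =>
        obtain ⟨l, s2, m2, w, hs, hm⟩ := ih m (Nat.lt_succ_self m) hrest hval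
        exact ⟨l, s2, m2 + 1, w, steps_cons hst' hs, hm⟩
      | derefVal hm => exact ⟨_, s, 0, _, .refl, hm⟩

/-- no uninitialized memory access.  If `!e` is well-typed with
type `τ` and evaluates (in a well-formed state) to a value, then `e` has
pointer type `τ*` with a smaller-or-equal effect, `e` evaluates to some
location `l`, and the memory of the resulting state contains a value at `l`:
every dereference reads an initialized location. -/
theorem no_uninitialized_memory_access
    (Γ : String → Option Ty) (St : Nat → Option Ty)
    (e : Expr) (τ : Ty) (η : List Eff) (s s'' : State) (v : Expr) (n : Nat)
    (ht : HasType Γ St (.deref e) τ η) (hwf : WFState Γ St s)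
    (hsteps : Steps s (.deref e) s'' v n) (hval : IsVal v) :
    ∃ (η' : List Eff) (l : Nat) (s' : State) (m : Nat) (w : Expr),
      HasType Γ St e (.ptr τ) η' ∧ η' ⊆ η ∧
      Steps s e s' (.loc l) m ∧ s'.mem l = some w := by
  cases ht with
  | deref ht' =>
    obtain ⟨l, s', m, w, hs, hm⟩ := deref_steps_loc n hsteps hval
    exact ⟨_, l, s', m, w, ht', List.subset_cons_self _ _, hs, hm⟩
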